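/- For any summable weighted graph (G,m) whose vertex set has at least two elements, the dual Cheeger constant and the invariant κ satisfy h̄(G,m) + κ(G,m) ≥ 1. -/

import Mathlib

open MeasureTheory

/-- A summable weighted graph on a vertex set `V`. -/
structure SummableWeightedGraph (V : Type*) where
  m : V → V → ℝ
  symm : ∀ u v, m u v = m v u
  nonneg : ∀ u v, 0 ≤ m u v
  loopless : ∀ v, m v v = 0
  summable : Summable fun p : V × V => m p.1 p.2
  noIsolated : ∀ v, 0 < ∑' u, m v u

namespace SummableWeightedGraph

variable {V : Type*} (G : SummableWeightedGraph V)

/-- The weight of a vertex. -/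
noncomputable def deg (v : V) : ℝ := ∑' u, G.m v u

/-- The weight of a set of vertices. -/
noncomputable def setWeight (S : Set V) : ℝ := ∑' v : S, G.deg v

/-- The weight of the boundary of a set of vertices. -/
noncomputable def boundaryWeight (S : Set V) : ℝ :=
  ∑' p : ↥S × ↥Sᶜ, G.m p.1 p.2

/-- The Cheeger constant. -/
noncomputable def cheegerConst : ℝ :=
  sInf { r : ℝ | ∃ S : Set V, S.Nonempty ∧ G.setWeight S ≤ G.setWeight Sᶜ ∧
    r = G.boundaryWeight S / G.setWeight S }

/-- The weighted counting measure on vertices. -/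
noncomputable def measure [MeasurableSpace V] : Measure V :=
  Measure.sum fun v => ENNReal.ofReal (G.deg v) • Measure.dirac v

/-- The normalised Laplacian, characterised by its pointwise formula. -/
def IsLaplacian [MeasurableSpace V]
    (L : Lp ℝ 2 G.measure →L[ℝ] Lp ℝ 2 G.measure) : Prop :=
  ∀ f : Lp ℝ 2 G.measure, ∀ᵐ v ∂G.measure,
    L f v = f v - (G.deg v)⁻¹ * ∑' u, G.m v u * f u

end SummableWeightedGraph

namespace SummableWeightedGraph

variable {V : Type*} (G : SummableWeightedGraph V)

/-- Total weight `m(A,B)` of the edges joining `A` to `B`. -/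
noncomputable def pairWeight (A B : Set V) : ℝ := ∑' q : ↥A × ↥B, G.m q.1 q.2

/-- The dual Cheeger ratio of a pair of disjoint nonempty sets of vertices. -/
noncomputable def dualCheegerRatio (A B : Set V) : ℝ :=
  2 * G.pairWeight A B / (G.setWeight A + G.setWeight B)

/-- The dual Cheeger constant. -/
noncomputable def dualCheegerConst : ℝ :=
  sSup { r : ℝ | ∃ A B : Set V, A.Nonempty ∧ B.Nonempty ∧ Disjoint A B ∧
    r = G.dualCheegerRatio A B }

end SummableWeightedGraph

namespace SummableWeightedGraph

variable {V : Type*} (G : SummableWeightedGraph V)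

/-- `p_S(v)`, the probability that the random walk moves from `v` into `S` in one step. -/
noncomputable def pProb (S : Set V) (v : V) : ℝ := (∑' u : S, G.m v u) / G.deg v

/-- `κ(A,B)` for a partition `V = A ⊔ B` into nonempty sets. -/
noncomputable def kappaPair (A B : Set V) : ℝ :=
  max (⨆ v : A, G.pProb A v) (⨆ w : B, G.pProb B w)

/-- The invariant `κ(G,m)`. -/
noncomputable def kappa : ℝ :=
  sInf { r : ℝ | ∃ A B : Set V, A.Nonempty ∧ B.Nonempty ∧ Disjoint A B ∧
    A ∪ B = Set.univ ∧ r = G.kappaPair A B }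

end SummableWeightedGraph

/-!
If `V = A ⊔ B` and every vertex sends at most a fraction `κ = κ(A,B)` of its weight into its
own side, then every vertex of `A` sends at least `(1 - κ) m(v)` into `B` and vice versa.
Summing over both sides gives `(1 - κ)(m(A) + m(B)) ≤ 2 m(A,B)`, i.e. `1 - κ(A,B) ≤ h̄(A,B)`,
and `h̄(A,B) ≤ h̄(G,m)`. Taking the infimum over partitions gives `1 - h̄(G,m) ≤ κ(G,m)`.
-/

namespace SummableWeightedGraph

variable {V : Type*} (G : SummableWeightedGraph V)

lemma summable_m (v : V) : Summable (G.m v) :=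
  G.summable.comp_injective (i := Prod.mk v) (Prod.mk_right_injective v)

lemma deg_pos (v : V) : 0 < G.deg v := G.noIsolated v

lemma summable_deg : Summable G.deg :=
  ((summable_prod_of_nonneg fun _ => G.nonneg _ _).mp G.summable).2

lemma tsum_subtype_m_le_deg (v : V) (S : Set V) : ∑' u : S, G.m v u ≤ G.deg v :=
  ((G.summable_m v).subtype S).tsum_le_tsum_of_inj Subtype.val Subtype.val_injective
    (fun u _ => G.nonneg v u) (fun _ => le_rfl) (G.summable_m v)

lemma pProb_le_one (S : Set V) (v : V) : G.pProb S v ≤ 1 :=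
  (div_le_one (G.deg_pos v)).mpr (G.tsum_subtype_m_le_deg v S)

lemma pProb_add_pProb_compl (S : Set V) (v : V) : G.pProb S v + G.pProb Sᶜ v = 1 := by
  rw [pProb, pProb, ← add_div, ((G.summable_m v).subtype S).tsum_add_tsum_compl
    ((G.summable_m v).subtype Sᶜ)]
  exact div_self (G.deg_pos v).ne'

lemma bddAbove_range_pProb (S : Set V) : BddAbove (Set.range fun v : S => G.pProb S v) :=
  ⟨1, by rintro _ ⟨v, rfl⟩; exact G.pProb_le_one S v⟩

lemma pProb_le_kappaPair_left (A B : Set V) (v : A) : G.pProb A v ≤ G.kappaPair A B :=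
  (le_ciSup (G.bddAbove_range_pProb A) v).trans (le_max_left _ _)

lemma pProb_le_kappaPair_right (A B : Set V) (w : B) : G.pProb B w ≤ G.kappaPair A B :=
  (le_ciSup (G.bddAbove_range_pProb B) w).trans (le_max_right _ _)

lemma setWeight_pos {A : Set V} (hA : A.Nonempty) : 0 < G.setWeight A := by
  obtain ⟨a, ha⟩ := hA
  exact (G.summable_deg.subtype A).tsum_pos (fun v => (G.deg_pos _).le) ⟨a, ha⟩ (G.deg_pos a)

lemma setWeight_nonneg (S : Set V) : 0 ≤ G.setWeight S :=
  tsum_nonneg fun v => (G.deg_pos v).le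

lemma setWeight_add_setWeight_pos {A : Set V} (hA : A.Nonempty) (B : Set V) :
    0 < G.setWeight A + G.setWeight B :=
  add_pos_of_pos_of_nonneg (G.setWeight_pos hA) (G.setWeight_nonneg B)

lemma summable_pairWeight (A B : Set V) : Summable fun q : ↥A × ↥B => G.m q.1 q.2 :=
  G.summable.comp_injective (i := Prod.map Subtype.val Subtype.val)
    (Subtype.val_injective.prodMap Subtype.val_injective)

lemma pairWeight_eq_tsum_tsum (A B : Set V) :
    G.pairWeight A B = ∑' v : A, ∑' u : B, G.m v u :=
  (G.summable_pairWeight A B).tsum_prod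

lemma pairWeight_comm (A B : Set V) : G.pairWeight A B = G.pairWeight B A := by
  rw [pairWeight, pairWeight, ← (Equiv.prodComm ↥A ↥B).tsum_eq]
  exact tsum_congr fun q => G.symm _ _

lemma summable_tsum_subtype_m (A B : Set V) : Summable fun v : A => ∑' u : B, G.m v u :=
  (G.summable_deg.subtype A).of_nonneg_of_le (fun _ => tsum_nonneg fun _ => G.nonneg _ _)
    fun v => G.tsum_subtype_m_le_deg v B

lemma pairWeight_le_setWeight_left (A B : Set V) : G.pairWeight A B ≤ G.setWeight A := by
  rw [pairWeight_eq_tsum_tsum]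
  exact (G.summable_tsum_subtype_m A B).tsum_le_tsum (fun v => G.tsum_subtype_m_le_deg v B)
    (G.summable_deg.subtype A)

lemma dualCheegerRatio_le_one {A B : Set V} (hA : A.Nonempty) :
    G.dualCheegerRatio A B ≤ 1 := by
  have hAB := G.pairWeight_le_setWeight_left A B
  have hBA := G.pairWeight_le_setWeight_left B A
  rw [pairWeight_comm] at hBA
  rw [dualCheegerRatio, div_le_one (G.setWeight_add_setWeight_pos hA B)]
  linarith

lemma bddAbove_dualCheegerRatio : BddAbove { r : ℝ | ∃ A B : Set V, A.Nonempty ∧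
    B.Nonempty ∧ Disjoint A B ∧ r = G.dualCheegerRatio A B } :=
  ⟨1, by rintro _ ⟨A, B, hA, -, -, rfl⟩; exact G.dualCheegerRatio_le_one hA⟩

lemma dualCheegerRatio_le_dualCheegerConst {A B : Set V} (hA : A.Nonempty)
    (hB : B.Nonempty) (hAB : Disjoint A B) : G.dualCheegerRatio A B ≤ G.dualCheegerConst :=
  le_csSup G.bddAbove_dualCheegerRatio ⟨A, B, hA, hB, hAB, rfl⟩

lemma one_sub_mul_setWeight_le_pairWeight_compl (C : Set V) {κ : ℝ}
    (hκ : ∀ v : C, G.pProb C v ≤ κ) : (1 - κ) * G.setWeight C ≤ G.pairWeight C Cᶜ := by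
  rw [pairWeight_eq_tsum_tsum, setWeight, ← tsum_mul_left]
  refine ((G.summable_deg.subtype C).mul_left _).tsum_le_tsum (fun v => ?_)
    (G.summable_tsum_subtype_m C Cᶜ)
  have hcompl : ∑' u : ↥Cᶜ, G.m v u = (1 - G.pProb C v) * G.deg v := by
    rw [← G.pProb_add_pProb_compl C v, add_sub_cancel_left, pProb,
      div_mul_cancel₀ _ (G.deg_pos v).ne']
  rw [hcompl]
  exact mul_le_mul_of_nonneg_right (by linarith [hκ v]) (G.deg_pos v).le

lemma one_sub_kappaPair_le_dualCheegerRatio_compl {A : Set V} (hA : A.Nonempty) :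
    1 - G.kappaPair A Aᶜ ≤ G.dualCheegerRatio A Aᶜ := by
  have hA_bound :=
    G.one_sub_mul_setWeight_le_pairWeight_compl A (G.pProb_le_kappaPair_left A Aᶜ)
  have hAc_bound :=
    G.one_sub_mul_setWeight_le_pairWeight_compl Aᶜ (G.pProb_le_kappaPair_right A Aᶜ)
  rw [compl_compl, ← pairWeight_comm] at hAc_bound
  rw [dualCheegerRatio, le_div_iff₀ (G.setWeight_add_setWeight_pos hA Aᶜ)]
  linarith

end SummableWeightedGraph

open SummableWeightedGraph in
theorem dualCheeger_add_kappa_ge_one_general {V : Type*} [Nontrivial V]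
    (G : SummableWeightedGraph V) :
    1 ≤ G.dualCheegerConst + G.kappa := by
  obtain ⟨a, b, hab⟩ := exists_pair_ne V
  have hcompl_nonempty : ({a} : Set V)ᶜ.Nonempty := ⟨b, hab.symm⟩
  have hkappa : 1 - G.dualCheegerConst ≤ G.kappa := by
    refine le_csInf ⟨_, {a}, {a}ᶜ, ⟨a, rfl⟩, hcompl_nonempty, disjoint_compl_right,
      Set.union_compl_self _, rfl⟩ ?_
    rintro _ ⟨A, B, hA, hB, hAB, hunion, rfl⟩
    obtain rfl : B = Aᶜ := (IsCompl.of_eq hAB.eq_bot hunion).compl_eq.symm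
    linarith [G.one_sub_kappaPair_le_dualCheegerRatio_compl hA,
      G.dualCheegerRatio_le_dualCheegerConst hA hB hAB]
  linarith

open SummableWeightedGraph in
/-- `h̄(G,m) + κ(G,m) ≥ 1`. -/
theorem dualCheeger_add_kappa_ge_one {V : Type*} [Countable V] [Nontrivial V]
    (G : SummableWeightedGraph V) :
    1 ≤ G.dualCheegerConst + G.kappa :=
  dualCheeger_add_kappa_ge_one_general G
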